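/- In the origami monoid O_n, for indices i, j with |i-j|=1 and any generator type γ ∈ {α, β}, the relation γ̄_i γ_i γ_j γ̄_i = γ̄_i γ_i γ_j holds. -/
import Mathlib


namespace Origami

/-- Generators of the origami monoid: a type bit (`true` for α, `false` for β)
and an index in `Fin (n-1)` (so indices `1,…,n-1` are represented by `0,…,n-2`). -/
inductive Gen (n : ℕ) : Type
  | mk (t : Bool) (i : Fin (n - 1))
deriving DecidableEq

/-- Words over the generators. -/
abbrev W (n : ℕ) := FreeMonoid (Gen n)

/-- The word consisting of the single generator of type `t` and index `i`. -/
def go {n : ℕ} (t : Bool) (i : Fin (n - 1)) : W n := FreeMonoid.of (Gen.mk t i)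

/-- `|i - j| = 1`. -/
def adj {n : ℕ} (i j : Fin (n - 1)) : Prop := i.val + 1 = j.val ∨ j.val + 1 = i.val

/-- `|i - j| ≥ 2`. -/
def far {n : ℕ} (i j : Fin (n - 1)) : Prop := i.val + 2 ≤ j.val ∨ j.val + 2 ≤ i.val

/-- The defining relations (1)–(5), (1a), (2a), (3a) of the origami monoid. -/
inductive Rel (n : ℕ) : W n → W n → Prop
  | idem (t : Bool) (i : Fin (n - 1)) : Rel n (go t i * go t i) (go t i)
  | jones (t : Bool) (i j : Fin (n - 1)) (h : adj i j) :
      Rel n (go t i * go t j * go t i) (go t i)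
  | inter (t : Bool) (i j : Fin (n - 1)) (h : i ≠ j) :
      Rel n (go t i * go (!t) j) (go (!t) j * go t i)
  | intra (t : Bool) (i j : Fin (n - 1)) (h : far i j) :
      Rel n (go t i * go t j) (go t j * go t i)
  | idemA (t : Bool) (i : Fin (n - 1)) :
      Rel n (go t i * go (!t) i * (go t i * go (!t) i)) (go t i * go (!t) i)
  | jonesA (t : Bool) (i j : Fin (n - 1)) (h : adj i j) :
      Rel n (go t i * go (!t) i * (go t j * go (!t) j) * (go t i * go (!t) i))
            (go t i * go (!t) i)

/-- The congruence generated by the origami relations. -/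
def oriCon (n : ℕ) : Con (W n) := conGen (Rel n)

/-- The origami monoid `O_n`. -/
abbrev O (n : ℕ) := (oriCon n).Quotient

/-- The image of a generator in `O_n`. -/
def gen {n : ℕ} (t : Bool) (i : Fin (n - 1)) : O n := (oriCon n).mk' (go t i)

/-- The generator `α_i`. -/
def genA {n : ℕ} (i : Fin (n - 1)) : O n := gen true i

/-- The generator `β_i`. -/
def genB {n : ℕ} (i : Fin (n - 1)) : O n := gen false i

lemma rel_eq {n : ℕ} {u v : W n} (h : Rel n u v) :
    (oriCon n).mk' u = (oriCon n).mk' v :=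
  ((oriCon n).eq).mpr (ConGen.Rel.of u v h)

lemma adj_ne {n : ℕ} {i j : Fin (n - 1)} (h : adj i j) : i ≠ j := by
  rintro rfl
  rcases h with h | h <;> omega

lemma adj_symm {n : ℕ} {i j : Fin (n - 1)} (h : adj i j) : adj j i := h.symm

/-- Generic monoid computation underlying Lemma (b). -/
lemma key {M : Type*} [Monoid M] (a b c d : M)
    (hb : b * b = b) (hcac : c * a * c = c) (hcb : c * b = b * c)
    (h5 : b * a * (d * c) * (b * a) = b * a) :
    b * a * c * b = b * a * c := by
  have expand : b * (a * (d * (c * (b * a)))) = b * a := by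
    rw [show b * (a * (d * (c * (b * a)))) = b * a * (d * c) * (b * a) from by
      simp [mul_assoc], h5]
  have hcb' : ∀ x : M, c * (b * x) = b * (c * x) := fun x => by
    rw [← mul_assoc, hcb, mul_assoc]
  have hcac' : ∀ x : M, c * (a * (c * x)) = c * x := fun x => by
    rw [← mul_assoc, ← mul_assoc, hcac]
  have hcac2 : c * (a * c) = c := by rw [← mul_assoc, hcac]
  have hb' : ∀ x : M, b * (b * x) = b * x := fun x => by
    rw [← mul_assoc, hb]
  calc b * a * c * b
      = b * (a * (d * (c * (b * a)))) * c * b := by rw [expand]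
    _ = b * (a * (d * (c * (b * (a * (c * b)))))) := by simp [mul_assoc]
    _ = b * (a * (d * (b * (c * (a * (c * b)))))) := by rw [hcb']
    _ = b * (a * (d * (b * (c * b)))) := by rw [hcac']
    _ = b * (a * (d * (b * (b * c)))) := by rw [hcb]
    _ = b * (a * (d * (b * c))) := by rw [hb']
    _ = b * (a * (d * (b * (c * (a * c))))) := by rw [hcac2]
    _ = b * (a * (d * (c * (b * (a * c))))) := by rw [hcb']
    _ = b * (a * (d * (c * (b * a)))) * c := by simp [mul_assoc]
    _ = b * a * c := by rw [expand]

end Origami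

open Origami in
/-- Lemma (b): `γ̄_i γ_i γ_j γ̄_i = γ̄_i γ_i γ_j` for `|i-j| = 1`. -/
theorem origami_lemma_b (n : ℕ) (t : Bool) (i j : Fin (n - 1)) (hij : adj i j) :
    gen (!t) i * gen t i * gen t j * gen (!t) i = gen (!t) i * gen t i * gen t j := by
  have hb : gen (!t) i * gen (!t) i = gen (!t) i := by
    simpa [gen, map_mul] using rel_eq (Rel.idem (!t) i)
  have hcac : gen t j * gen t i * gen t j = gen t j := by
    simpa [gen, map_mul] using rel_eq (Rel.jones t j i (adj_symm hij))
  have hcb : gen t j * gen (!t) i = gen (!t) i * gen t j := by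
    simpa [gen, map_mul] using rel_eq (Rel.inter t j i (adj_ne (adj_symm hij)))
  have h5 : gen (!t) i * gen t i * (gen (!t) j * gen t j) * (gen (!t) i * gen t i)
      = gen (!t) i * gen t i := by
    simpa [gen, map_mul, Bool.not_not] using rel_eq (Rel.jonesA (!t) i j hij)
  exact key (gen t i) (gen (!t) i) (gen t j) (gen (!t) j) hb hcac hcb h5
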